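/- Let P be the Petersen graph and G the graph obtained from P by subdividing every edge twice. Then gap(G) = 0. -/

import Mathlib

structure LoopGraph (V : Type*) where
  Adj : V → V → Prop
  symm : ∀ u v, Adj u v → Adj v u

namespace LoopGraph

variable {V : Type*} [Fintype V] [DecidableEq V]

/-- `C` is a set-join cover of `G`: a finite family of set-joins `K ∨ L`
(with `K`, `L` nonempty) whose edge sets union to `E(G)`. -/
def IsCover (G : LoopGraph V) (C : Finset (Finset V × Finset V)) : Prop :=
  (∀ p ∈ C, p.1.Nonempty ∧ p.2.Nonempty) ∧
  (∀ u v : V, G.Adj u v ↔ ∃ p ∈ C, (u ∈ p.1 ∧ v ∈ p.2) ∨ (u ∈ p.2 ∧ v ∈ p.1))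

/-- The component set of a set-join cover: all sets occurring as a part. -/
def sjComponents (C : Finset (Finset V × Finset V)) : Finset (Finset V) :=
  C.image Prod.fst ∪ C.image Prod.snd

/-- The SNT-rank: minimal number of distinct components over all set-join covers. -/
noncomputable def stp (G : LoopGraph V) : ℕ :=
  sInf {n | ∃ C : Finset (Finset V × Finset V), G.IsCover C ∧ (sjComponents C).card = n}

/-- `gap G = |V(G)| - stp G`. -/
noncomputable def gap (G : LoopGraph V) : ℕ :=
  Fintype.card V - G.stp

/-- No vertices `u₁ ≠ u₂`, `v₁ ≠ v₂` with all four pairs `{uᵢ, vⱼ}` edges. -/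
def StronglyC4Free (G : LoopGraph V) : Prop :=
  ¬ ∃ u₁ u₂ v₁ v₂ : V, u₁ ≠ u₂ ∧ v₁ ≠ v₂ ∧
    G.Adj u₁ v₁ ∧ G.Adj u₁ v₂ ∧ G.Adj u₂ v₁ ∧ G.Adj u₂ v₂

/-- Induced subgraph on a finset of vertices. -/
def induce (G : LoopGraph V) (s : Finset V) : LoopGraph {x // x ∈ s} :=
  ⟨fun a b => G.Adj a b, fun _ _ h => G.symm _ _ h⟩

/-- Degree of a vertex; a loop counts twice. -/
noncomputable def deg (G : LoopGraph V) (x : V) : ℕ :=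
  {y | G.Adj x y}.ncard + {y | y = x ∧ G.Adj x y}.ncard

end LoopGraph

open LoopGraph

/-- `zeta ends` is the graph obtained from the multigraph with edge set `E`
and endpoint map `ends` by replacing every edge `e` with endpoints `(x, y)`
by the path `x — (e,0) — (e,1) — y` (each edge subdivided twice). -/
def zeta {V E : Type*} (ends : E → V × V) : LoopGraph (V ⊕ E × Fin 2) where
  Adj x y :=
    (∃ e : E, (x = Sum.inl (ends e).1 ∧ y = Sum.inr (e, 0)) ∨
              (y = Sum.inl (ends e).1 ∧ x = Sum.inr (e, 0))) ∨
    (∃ e : E, (x = Sum.inr (e, 0) ∧ y = Sum.inr (e, 1)) ∨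
              (y = Sum.inr (e, 0) ∧ x = Sum.inr (e, 1))) ∨
    (∃ e : E, (x = Sum.inl (ends e).2 ∧ y = Sum.inr (e, 1)) ∨
              (y = Sum.inl (ends e).2 ∧ x = Sum.inr (e, 1)))
  symm := by
    rintro x y (⟨e, h | h⟩ | ⟨e, h | h⟩ | ⟨e, h | h⟩)
    · exact Or.inl ⟨e, Or.inr h⟩
    · exact Or.inl ⟨e, Or.inl h⟩
    · exact Or.inr (Or.inl ⟨e, Or.inr h⟩)
    · exact Or.inr (Or.inl ⟨e, Or.inl h⟩)
    · exact Or.inr (Or.inr ⟨e, Or.inr h⟩)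
    · exact Or.inr (Or.inr ⟨e, Or.inl h⟩)

attribute [local instance] Classical.propDecidable

/-- The vertices of the Petersen graph, viewed as the Kneser graph `K(5,2)`:
two-element subsets of a five-element set. -/
abbrev PetersenVert : Type := {s : Finset (Fin 5) // s.card = 2}

/-- The edges of the Petersen graph: unordered pairs of disjoint 2-subsets. -/
abbrev PetersenEdge : Type :=
  {p : Sym2 PetersenVert // ∃ a b : PetersenVert, p = s(a, b) ∧ Disjoint a.1 b.1}

/-- The graph obtained from the Petersen graph by subdividing every edge
twice. -/
noncomputable def subdivPetersen :
    LoopGraph (PetersenVert ⊕ PetersenEdge × Fin 2) :=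
  zeta fun e => Quot.out (e.1 : Sym2 PetersenVert)

/-!
Fix a set-join cover of the double subdivision of a `d`-regular multigraph, `d > 0`. If `u` is
adjacent to `x` and `{x}` is not a component, then `x` lies in a component with at least two
elements, all adjacent to `u`. Charge every vertex to a component: a vertex `x` for which `{x}` is
a component to that singleton; a subdivision vertex `m` otherwise to the pair of neighbours of its
mate; an original vertex `v` otherwise to the pair `{v, m}` if some `m` whose mate is adjacent to
`v` is a singleton component, and else to the stars (components of size at least two inside the
neighbourhood of an original vertex) through the `d` such `m`. Singletons, pairs and stars are
distinct components, and a star contains at most `d` subdivision vertices, so double counting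
gives at least as many components as vertices.
-/

open Finset Sum

theorem Finset.card_filter_singleton_mem_le {α : Type*} [Fintype α] [DecidableEq α]
    (K : Finset (Finset α)) : #{x | {x} ∈ K} ≤ #{S ∈ K | #S = 1} :=
  card_le_card_of_injOn (fun x => {x}) (fun x hx => by simpa using hx)
    (fun _ _ _ _ h => singleton_injective h)

theorem Finset.card_filter_sum_type {α β : Type*} [Fintype α] [Fintype β]
    (p : α ⊕ β → Prop) [DecidablePred p] :
    #{x | p x} = #{a | p (inl a)} + #{b | p (inr b)} := by
  simp only [card_filter, Fintype.sum_sum_type]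

namespace LoopGraph

variable {V : Type*} [DecidableEq V] {G : LoopGraph V}

theorem exists_isCover [Fintype V] (G : LoopGraph V) : ∃ C, G.IsCover C := by
  refine ⟨(univ.filter fun q : V × V => G.Adj q.1 q.2).image fun q => ({q.1}, {q.2}),
    ?_, fun u v => ⟨fun h => ?_, ?_⟩⟩
  · simp only [mem_image]
    rintro _ ⟨q, -, rfl⟩
    exact ⟨singleton_nonempty _, singleton_nonempty _⟩
  · exact ⟨({u}, {v}), mem_image.mpr ⟨(u, v), by simpa using h, rfl⟩, by simp⟩
  · simp only [mem_image, mem_filter, mem_univ, true_and]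
    rintro ⟨_, ⟨⟨a, b⟩, hab, rfl⟩, ⟨hu, hv⟩ | ⟨hu, hv⟩⟩ <;>
      simp only [mem_singleton] at hu hv <;> subst hu hv
    · exact hab
    · exact G.symm _ _ hab

theorem gap_eq_zero_of_forall_card_le [Fintype V]
    (h : ∀ C, G.IsCover C → Fintype.card V ≤ #(sjComponents C)) : G.gap = 0 := by
  obtain ⟨C₀, hC₀⟩ := G.exists_isCover
  obtain ⟨C, hC, hcard⟩ := Nat.sInf_mem (⟨_, C₀, hC₀, rfl⟩ :
    {n | ∃ C, G.IsCover C ∧ #(sjComponents C) = n}.Nonempty)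
  have := h C hC
  rw [gap, stp, ← hcard]
  omega

namespace IsCover

variable {C : Finset (Finset V × Finset V)}

theorem exists_component_subset_adj (hC : G.IsCover C) {u v : V} (huv : G.Adj u v)
    (hv : {v} ∉ sjComponents C) :
    ∃ S ∈ sjComponents C, v ∈ S ∧ 1 < #S ∧ ∀ x ∈ S, G.Adj u x := by
  have hbig : ∀ S ∈ sjComponents C, v ∈ S → 1 < #S := fun S hS hvS =>
    one_lt_card_iff_nontrivial.mpr <| (nontrivial_iff_ne_singleton hvS).mpr
      (by rintro rfl; exact hv hS)
  obtain ⟨p, hp, ⟨hu, hvS⟩ | ⟨hu, hvS⟩⟩ := (hC.2 u v).mp huv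
  · have hS : p.2 ∈ sjComponents C := mem_union_right _ (mem_image_of_mem _ hp)
    exact ⟨p.2, hS, hvS, hbig _ hS hvS,
      fun x hx => (hC.2 u x).mpr ⟨p, hp, .inl ⟨hu, hx⟩⟩⟩
  · have hS : p.1 ∈ sjComponents C := mem_union_left _ (mem_image_of_mem _ hp)
    exact ⟨p.1, hS, hvS, hbig _ hS hvS,
      fun x hx => (hC.2 u x).mpr ⟨p, hp, .inr ⟨hu, hx⟩⟩⟩

theorem pair_mem_sjComponents (hC : G.IsCover C) {u a b : V}
    (hu : ∀ x, G.Adj u x ↔ x = a ∨ x = b) (ha : {a} ∉ sjComponents C) :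
    {a, b} ∈ sjComponents C := by
  obtain ⟨S, hS, -, hcard, hadj⟩ := hC.exists_component_subset_adj ((hu a).mpr (.inl rfl)) ha
  have hsub : S ⊆ {a, b} := fun x hx => by simpa using (hu x).mp (hadj x hx)
  rwa [eq_of_subset_of_card_le hsub (card_le_two.trans hcard)] at hS

end IsCover

end LoopGraph

namespace zeta

variable {V E : Type*}

/-- The original vertex adjacent to the subdivision vertex `m`. -/
def foot (ends : E → V × V) (m : E × Fin 2) : V :=
  if m.2 = 0 then (ends m.1).1 else (ends m.1).2

def mate (m : E × Fin 2) : E × Fin 2 := (m.1, m.2.rev)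

@[simp] theorem mate_mate (m : E × Fin 2) : mate (mate m) = m := by simp [mate]

theorem mk_foot_foot_mate (ends : E → V × V) (m : E × Fin 2) :
    s(foot ends m, foot ends (mate m)) = s((ends m.1).1, (ends m.1).2) := by
  obtain ⟨e, i⟩ := m
  fin_cases i
  · simp [foot, mate]
  · simp [foot, mate, Sym2.eq_swap]

variable {ends : E → V × V}

theorem adj_inl_iff {v : V} {x : V ⊕ E × Fin 2} :
    (zeta ends).Adj (inl v) x ↔ ∃ m, x = inr m ∧ foot ends m = v := by
  constructor
  · rintro (⟨e, h | h⟩ | ⟨e, h | h⟩ | ⟨e, h | h⟩) <;> simp_all [foot]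
  · rintro ⟨⟨e, i⟩, rfl, rfl⟩
    fin_cases i
    · exact .inl ⟨e, .inl ⟨rfl, rfl⟩⟩
    · exact .inr (.inr ⟨e, .inl ⟨rfl, rfl⟩⟩)

theorem adj_inr_iff {m : E × Fin 2} {x : V ⊕ E × Fin 2} :
    (zeta ends).Adj (inr m) x ↔ x = inl (foot ends m) ∨ x = inr (mate m) := by
  obtain ⟨e, i⟩ := m
  fin_cases i
  · simp [zeta, foot, mate]
  · simpa [zeta, foot, mate] using or_comm

theorem card_filter_foot_mate [Fintype E] [DecidableEq V] (v : V) :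
    #{m | foot ends (mate m) = v} = #{m | foot ends m = v} :=
  card_nbij' mate mate (by simp [Set.MapsTo]) (by simp [Set.MapsTo]) (by simp [Set.LeftInvOn])
    (by simp [Set.RightInvOn, Set.LeftInvOn])

section Cover

variable [DecidableEq V] [DecidableEq E]
  {C : Finset (Finset (V ⊕ E × Fin 2) × Finset (V ⊕ E × Fin 2))}

theorem pair_mem_sjComponents (hC : (zeta ends).IsCover C) (m : E × Fin 2)
    (h : {inl (foot ends (mate m))} ∉ sjComponents C ∨ {inr m} ∉ sjComponents C) :
    {inl (foot ends (mate m)), inr m} ∈ sjComponents C := by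
  have hnbhd (x) :
      (zeta ends).Adj (inr (mate m)) x ↔ x = inl (foot ends (mate m)) ∨ x = inr m := by
    simp [adj_inr_iff]
  rcases h with h | h
  · exact hC.pair_mem_sjComponents hnbhd h
  · rw [pair_comm]
    exact hC.pair_mem_sjComponents (fun x => (hnbhd x).trans or_comm) h

variable [Fintype V] [Fintype E]

theorem card_add_card_le_card_filter_exists_inl_mem (hC : (zeta ends).IsCover C) :
    #{m | {inr m} ∉ sjComponents C} +
      #{v | {inl v} ∉ sjComponents C ∧
        ∃ m, foot ends (mate m) = v ∧ {inr m} ∈ sjComponents C} ≤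
      #{S ∈ sjComponents C | 1 < #S ∧ ∃ v, inl v ∈ S} := by
  set P : Finset (E × Fin 2) := {m | {inl (foot ends (mate m)), inr m} ∈ sjComponents C}
  have hmid : #{m | {inr m} ∉ sjComponents C} ≤ #{m ∈ P | {inr m} ∉ sjComponents C} :=
    card_le_card fun m hm => by
      simp only [mem_filter, mem_univ, true_and, P] at hm ⊢
      exact ⟨pair_mem_sjComponents hC m (.inr hm), hm⟩
  have hend : #{v | {inl v} ∉ sjComponents C ∧
      ∃ m, foot ends (mate m) = v ∧ {inr m} ∈ sjComponents C} ≤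
      #{m ∈ P | ¬{inr m} ∉ sjComponents C} := by
    refine (card_le_card fun v hv => ?_).trans (card_image_le (f := foot ends ∘ mate))
    simp only [mem_filter, mem_univ, true_and] at hv
    obtain ⟨hv, m, rfl, hm⟩ := hv
    exact mem_image.mpr ⟨m, by simpa [P, hm] using pair_mem_sjComponents hC m (.inl hv), rfl⟩
  have hpair : #P ≤ #{S ∈ sjComponents C | 1 < #S ∧ ∃ v, inl v ∈ S} := by
    refine card_le_card_of_injOn (fun m => {inl (foot ends (mate m)), inr m}) (fun m hm => ?_) ?_
    · simp only [coe_filter, mem_univ, true_and, Set.mem_ofPred_eq, P] at hm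
      simp [hm]
    · intro m _ m' _ h
      simpa using (Finset.ext_iff.mp h (inr m)).mp (by simp)
  rw [← card_filter_add_card_filter_not (fun m => {inr m} ∉ sjComponents C) (s := P)] at hpair
  omega

theorem card_filter_forall_le_card_filter_forall_inl_notMem (hC : (zeta ends).IsCover C)
    {d : ℕ} (hd : 0 < d) (hreg : ∀ v, #{m | foot ends m = v} = d) :
    #{v | ∀ m, foot ends (mate m) = v → {inr m} ∉ sjComponents C} ≤
      #{S ∈ sjComponents C | 1 < #S ∧ ∀ v, inl v ∉ S} := by
  set B : Finset V := {v | ∀ m, foot ends (mate m) = v → {inr m} ∉ sjComponents C}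
  set T := {S ∈ sjComponents C | 1 < #S ∧ ∀ v, inl v ∉ S}
  set Z : Finset (E × Fin 2) := {m | foot ends (mate m) ∈ B}
  have hZ : #Z = #B * d := by
    rw [card_eq_sum_card_fiberwise (f := foot ends ∘ mate) (t := B)
      fun m hm => by simpa [Z] using hm, ← smul_eq_mul, ← sum_const]
    refine sum_congr rfl fun v hv => ?_
    rw [← hreg v, ← card_filter_foot_mate v]
    congr 1
    ext m
    simp only [Z, mem_filter, mem_univ, true_and, Function.comp_apply]
    exact ⟨fun h => h.2, fun h => ⟨h ▸ hv, h⟩⟩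
  let r (m : E × Fin 2) (S : Finset (V ⊕ E × Fin 2)) : Prop :=
    inr m ∈ S ∧ ∀ x ∈ S, (zeta ends).Adj (inl (foot ends m)) x
  have hcharged : ∀ m ∈ Z, 1 ≤ #(T.bipartiteAbove r m) := by
    intro m hm
    have hsing : {inr m} ∉ sjComponents C := by
      simp only [Z, B, mem_filter, mem_univ, true_and] at hm
      exact hm m rfl
    obtain ⟨S, hS, hmS, hcard, hadj⟩ :=
      hC.exists_component_subset_adj (adj_inl_iff.mpr ⟨m, rfl, rfl⟩) hsing
    refine one_le_card.mpr
      ⟨S, mem_filter.mpr ⟨mem_filter.mpr ⟨hS, hcard, fun v hv => ?_⟩, hmS, hadj⟩⟩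
    simpa using adj_inl_iff.mp (hadj _ hv)
  have hbounded : ∀ S ∈ T, #(Z.bipartiteBelow r S) ≤ d := by
    intro S _
    obtain h | ⟨m₀, hm₀⟩ := (Z.bipartiteBelow r S).eq_empty_or_nonempty
    · simp [h]
    rw [← hreg (foot ends m₀)]
    refine card_le_card fun m hm => ?_
    simp only [mem_bipartiteBelow, r] at hm hm₀
    obtain ⟨_, hmS, _⟩ := hm
    obtain ⟨m', hm', hfoot⟩ := adj_inl_iff.mp (hm₀.2.2 _ hmS)
    simpa [inr_injective hm'] using hfoot
  have := card_mul_le_card_mul r hcharged hbounded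
  rw [hZ, mul_one] at this
  exact Nat.le_of_mul_le_mul_right this hd

theorem card_le_card_sjComponents (hC : (zeta ends).IsCover C) {d : ℕ} (hd : 0 < d)
    (hreg : ∀ v, #{m | foot ends m = v} = d) :
    Fintype.card (V ⊕ E × Fin 2) ≤ #(sjComponents C) := by
  have hsingle := card_filter_singleton_mem_le (sjComponents C)
  have hpair := card_add_card_le_card_filter_exists_inl_mem hC
  have hstar := card_filter_forall_le_card_filter_forall_inl_notMem hC hd hreg
  set K := sjComponents C
  have hvert : Fintype.card (V ⊕ E × Fin 2) =
      #{x | {x} ∈ K} + (#{v | {inl v} ∉ K} + #{m | {inr m} ∉ K}) := by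
    rw [← card_univ, ← card_filter_add_card_filter_not (fun x => {x} ∈ K),
      card_filter_sum_type (fun x => {x} ∉ K)]
  have hinl : #{v | {inl v} ∉ K} ≤
      #{v | {inl v} ∉ K ∧ ∃ m, foot ends (mate m) = v ∧ {inr m} ∈ K} +
      #{v | ∀ m, foot ends (mate m) = v → {inr m} ∉ K} := by
    refine (card_le_card fun v hv => ?_).trans (card_union_le _ _)
    simp only [mem_union, mem_filter, mem_univ, true_and] at hv ⊢
    by_cases h : ∃ m, foot ends (mate m) = v ∧ {inr m} ∈ K
    · exact .inl ⟨hv, h⟩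
    · simp only [not_exists, not_and] at h
      exact .inr h
  have hcomp : #{S ∈ K | #S = 1} + (#{S ∈ K | 1 < #S ∧ ∃ v, inl v ∈ S} +
      #{S ∈ K | 1 < #S ∧ ∀ v, inl v ∉ S}) ≤ #K := by
    have hbig := card_filter_add_card_filter_not (s := K) (fun S => 1 < #S)
    have hsplit :=
      card_filter_add_card_filter_not (s := {S ∈ K | 1 < #S}) (fun S => ∃ v, inl v ∈ S)
    simp only [filter_filter, not_exists] at hsplit
    have hone : #{S ∈ K | #S = 1} ≤ #{S ∈ K | ¬1 < #S} :=
      card_le_card (monotone_filter_right _ fun S h => by omega)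
    omega
  omega

end Cover

theorem gap_eq_zero_of_regular [Fintype V] [DecidableEq V] [Fintype E] [DecidableEq E] {d : ℕ}
    (hd : 0 < d) (hreg : ∀ v, #{m | foot ends m = v} = d) : (zeta ends).gap = 0 :=
  gap_eq_zero_of_forall_card_le fun _ hC => card_le_card_sjComponents hC hd hreg

abbrev RelEdge (r : V → V → Prop) : Type _ := {p : Sym2 V // ∃ a b, p = s(a, b) ∧ r a b}

theorem card_filter_foot_quot_out [Fintype V] [DecidableEq V] {r : V → V → Prop}
    [DecidableRel r] [Fintype (RelEdge r)]
    (hsymm : ∀ a b, r a b → r b a) (hirrefl : ∀ a, ¬r a a) (v : V) :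
    #{m : RelEdge r × Fin 2 | foot (fun e => Quot.out e.1) m = v} = #{w | r v w} := by
  have hedge (m : RelEdge r × Fin 2) :
      s(foot (fun e => Quot.out e.1) m, foot (fun e => Quot.out e.1) (mate m)) = m.1.1 :=
    (mk_foot_foot_mate _ m).trans (Quot.out_eq _)
  have hadj (m : RelEdge r × Fin 2) (hm : foot (fun e => Quot.out e.1) m = v) :
      r v (foot (fun e => Quot.out e.1) (mate m)) := by
    obtain ⟨a, b, hab, hr⟩ := m.1.2
    rw [← hedge, hm, Sym2.eq_iff] at hab
    rcases hab with ⟨rfl, rfl⟩ | ⟨rfl, rfl⟩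
    exacts [hr, hsymm _ _ hr]
  refine card_nbij (fun m => foot (fun e => Quot.out e.1) (mate m)) (fun m hm => ?_)
    (fun m hm m' hm' h => ?_) (fun w hw => ?_)
  · simp only [coe_filter, mem_univ, true_and, Set.mem_ofPred_eq] at hm ⊢
    exact hadj m hm
  · simp only [coe_filter, mem_univ, true_and, Set.mem_ofPred_eq] at hm hm' h
    have he : m.1 = m'.1 := Subtype.ext (by rw [← hedge m, ← hedge m', hm, hm', h])
    obtain ⟨e, i⟩ := m
    obtain ⟨e', i'⟩ := m'
    obtain rfl : e = e' := he
    by_contra hne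
    have hmate : (e, i') = mate (e, i) := by
      simp only [mate, Prod.mk.injEq, true_and]
      rw [Fin.ext_iff, Fin.val_rev]
      have : i ≠ i' := fun h => hne (h ▸ rfl)
      omega
    exact hirrefl v (by simpa [← hmate, hm'] using hadj _ hm)
  · simp only [coe_filter, mem_univ, true_and, Set.mem_ofPred_eq] at hw ⊢
    set e : RelEdge r := ⟨s(v, w), v, w, rfl, hw⟩
    rcases Sym2.eq_iff.mp (hedge (e, 0)) with ⟨h1, h2⟩ | ⟨h1, h2⟩
    · exact ⟨(e, 0), h1, h2⟩
    · exact ⟨mate (e, 0), by simpa using h2, by simpa using h1⟩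

end zeta

theorem PetersenVert.card_filter_disjoint (v : PetersenVert) :
    #{w : PetersenVert | Disjoint v.1 w.1} = 3 := by
  revert v
  decide

theorem PetersenVert.not_disjoint_self (v : PetersenVert) : ¬Disjoint v.1 v.1 := by
  revert v
  decide

/-- The double subdivision of the Petersen graph has gap 0. -/
theorem stmt_17 : subdivPetersen.gap = 0 := by
  refine zeta.gap_eq_zero_of_regular (d := 3) three_pos fun v => ?_
  rw [zeta.card_filter_foot_quot_out (fun _ _ h => h.symm) PetersenVert.not_disjoint_self]
  exact PetersenVert.card_filter_disjoint v
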